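/- As d → ∞, ∏_{i=1}^d U(2i+1) ∼ C′/√d, i.e., lim_{d→∞} √d · ∏_{i=1}^d U(2i+1) = C′, where C′ = C/2 and C = 2^{1/6}·e^{1/2}·π/A⁶. -/

import Mathlib

open Filter Finset Real

namespace Dimer

/-- The kernel `L(d) = Γ((d-1)/2)² Γ((d+1)/2)² / Γ(d/2)⁴`. -/
noncomputable def Lker (d : ℝ) : ℝ :=
  Real.Gamma ((d - 1) / 2) ^ 2 * Real.Gamma ((d + 1) / 2) ^ 2 / Real.Gamma (d / 2) ^ 4

/-- The kernel `U(d) = Γ((d-1)/2)² Γ((d+1)/2)² / (Γ(d/2-1) Γ(d/2)² Γ(d/2+1))`. -/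
noncomputable def Uker (d : ℝ) : ℝ :=
  Real.Gamma ((d - 1) / 2) ^ 2 * Real.Gamma ((d + 1) / 2) ^ 2 /
    (Real.Gamma (d / 2 - 1) * Real.Gamma (d / 2) ^ 2 * Real.Gamma (d / 2 + 1))

/-- The Pochhammer symbol `(a)_n = a(a+1)⋯(a+n-1)`. -/
noncomputable def poch (a : ℝ) (n : ℕ) : ℝ := ∏ j ∈ Finset.range n, (a + (j : ℝ))

/-- `A` is the Glaisher–Kinkelin constant:
`lim_{n→∞} (0!·1!⋯(n-1)!) · n^{-n²/2+1/12} · (2π)^{-n/2} · e^{3n²/4} = e^{1/12}/A`. -/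
def IsGlaisher (A : ℝ) : Prop :=
  Filter.Tendsto (fun n : ℕ =>
      (∏ i ∈ Finset.range n, (Nat.factorial i : ℝ)) *
        (n : ℝ) ^ (-(n : ℝ) ^ 2 / 2 + 1 / 12) * (2 * Real.pi) ^ (-(n : ℝ) / 2) *
        Real.exp (3 * (n : ℝ) ^ 2 / 4))
    Filter.atTop (nhds (Real.exp (1 / 12) / A))

end Dimer

/-!
With `G n = ∏_{i<n} i!` and `Γ(j + 1/2) = √π (2j)! / (4^j j!)`, the product telescopes to
`2^(4d²+2d) G(d)⁴ G(d+1)⁴ / ((2d+1) π^(2d) G(2d+1)²)`. In terms of the sequence `g` normalized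
in `IsGlaisher`, `√d` times this is `g(d)⁴ g(d+1)⁴ / g(2d+1)²` times an elementary factor
tending to `π 2^(-5/6)`, which gives the limit `π 2^(-5/6) (e^(1/12)/A)⁶`.

Passing to the limit in the quotient needs `e^(1/12)/A ≠ 0` (for `A = 0` the hypothesis reads
`g → 0`). This comes from `g n ≥ e^(-3/2)`, which follows from
`log G(m+1) = (m+1) log m! - ∑_{k ≤ m} k log k`, Stirling's lower bound for `m!` and an
Euler–Maclaurin upper bound for `∑ k log k`.
-/

open scoped Nat

namespace Dimer

theorem Gamma_natCast_add_half (j : ℕ) :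
    Gamma (j + 1 / 2) = √π * (2 * j)! / (4 ^ j * j !) := by
  have h := Gamma_mul_Gamma_add_half ((j : ℝ) + 1 / 2)
  rw [show (j : ℝ) + 1 / 2 + 1 / 2 = j + 1 by ring, Gamma_nat_eq_factorial,
    show 1 - 2 * ((j : ℝ) + 1 / 2) = -(2 * j : ℕ) by push_cast; ring,
    show 2 * ((j : ℝ) + 1 / 2) = (2 * j : ℕ) + 1 by push_cast; ring, Gamma_nat_eq_factorial,
    rpow_neg zero_le_two, rpow_natCast, pow_mul, show (2 : ℝ) ^ 2 = 4 by norm_num] at h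
  rw [eq_div_iff (by positivity), mul_left_comm, h]
  field_simp

theorem Uker_two_mul_add_three (j : ℕ) :
    Uker (2 * ((j : ℝ) + 1) + 1) =
      (j ! : ℝ) ^ 3 * (j + 1)! ^ 4 * (j + 2)! * 4 ^ (4 * j + 4) /
        (π ^ 2 * (2 * j)! * (2 * j + 2)! ^ 2 * (2 * j + 4)!) := by
  have hΓhalf (a : ℕ) (b : ℝ) (h : b = a + 1 / 2) :
      Gamma b = √π * (2 * a)! / (4 ^ a * a !) := by
    rw [h, Gamma_natCast_add_half]
  have hΓnat (a : ℕ) (b : ℝ) (h : b = a + 1) : Gamma b = a ! := by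
    rw [h, Gamma_nat_eq_factorial]
  rw [Uker, hΓnat j _ (by ring), hΓnat (j + 1) _ (by push_cast; ring), hΓhalf j _ (by ring),
    hΓhalf (j + 1) _ (by push_cast; ring), hΓhalf (j + 2) _ (by push_cast; ring),
    show 2 * (j + 1) = 2 * j + 2 by ring, show 2 * (j + 2) = 2 * j + 4 by ring]
  have : √π ≠ 0 := by positivity
  field_simp
  rw [show √π ^ 4 = π ^ 2 by rw [show 4 = 2 * 2 by rfl, pow_mul, sq_sqrt pi_pos.le]]
  ring

noncomputable def factorialProd (n : ℕ) : ℝ := ∏ i ∈ range n, (i ! : ℝ)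

theorem factorialProd_succ (n : ℕ) : factorialProd (n + 1) = factorialProd n * n ! :=
  prod_range_succ _ n

theorem factorialProd_pos (n : ℕ) : 0 < factorialProd n :=
  prod_pos fun i _ => by positivity

theorem prod_Icc_Uker (d : ℕ) :
    ∏ i ∈ Icc 1 d, Uker (2 * (i : ℝ) + 1) =
      2 ^ (4 * d ^ 2 + 2 * d) * factorialProd d ^ 4 * factorialProd (d + 1) ^ 4 /
        ((2 * d + 1) * π ^ (2 * d) * factorialProd (2 * d + 1) ^ 2) := by
  induction d with
  | zero => simp [factorialProd]
  | succ d ih =>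
    rw [prod_Icc_succ_top (by omega), ih, Nat.cast_succ, Uker_two_mul_add_three,
      show 2 * (d + 1) + 1 = 2 * d + 1 + 1 + 1 by ring, show (4 : ℝ) = 2 ^ 2 by norm_num]
    simp only [factorialProd_succ, ← pow_mul]
    have := factorialProd_pos d
    have := factorialProd_pos (2 * d + 1)
    simp only [pow_succ, pow_zero, one_mul, Nat.factorial, Nat.succ_eq_add_one, Nat.cast_mul,
      Nat.cast_add, Nat.cast_one, Nat.cast_ofNat]
    field_simp
    ring

theorem log_add_one_eq {x : ℝ} (hx : 0 < x) : log (x + 1) = log x + log (1 + 1 / x) := by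
  rw [← log_mul hx.ne' (by positivity)]
  field_simp

noncomputable def glaisherSeq (n : ℕ) : ℝ :=
  factorialProd n * (n : ℝ) ^ (-(n : ℝ) ^ 2 / 2 + 1 / 12) * (2 * π) ^ (-(n : ℝ) / 2) *
    exp (3 * (n : ℝ) ^ 2 / 4)

theorem isGlaisher_iff (A : ℝ) :
    IsGlaisher A ↔ Tendsto glaisherSeq atTop (nhds (exp (1 / 12) / A)) := Iff.rfl

noncomputable def glaisherExponent (n : ℕ) : ℝ :=
  (-(n : ℝ) ^ 2 / 2 + 1 / 12) * log n - n / 2 * log (2 * π) + 3 * (n : ℝ) ^ 2 / 4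

theorem glaisherSeq_eq_mul_exp {n : ℕ} (hn : n ≠ 0) :
    glaisherSeq n = factorialProd n * exp (glaisherExponent n) := by
  rw [glaisherSeq, glaisherExponent, rpow_def_of_pos (by positivity),
    rpow_def_of_pos (by positivity), mul_assoc, mul_assoc, ← exp_add, ← exp_add]
  ring_nf

noncomputable def logCorrection (d : ℕ) : ℝ :=
  (2 * ((d : ℝ) + 1) ^ 2 - 1 / 3) * log (1 + 1 / d) -
    ((2 * d + 1) ^ 2 + 5 / 6) * log (1 + 1 / (2 * d))

theorem log_sqrt_mul_two_pow_div {d : ℕ} (hd : d ≠ 0) :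
    log (√d * 2 ^ (4 * d ^ 2 + 2 * d) / ((2 * d + 1) * π ^ (2 * d))) =
      4 * glaisherExponent d + 4 * glaisherExponent (d + 1) - 2 * glaisherExponent (2 * d + 1) +
        (log π - 5 / 6 * log 2 - 3 / 2 + logCorrection d) := by
  have hd0 : (0 : ℝ) < d := by positivity
  rw [log_div (by positivity) (by positivity), log_mul (by positivity) (by positivity),
    log_mul (by positivity) (by positivity), log_sqrt hd0.le, log_pow, log_pow,
    glaisherExponent, glaisherExponent, glaisherExponent, log_mul two_ne_zero pi_ne_zero,
    logCorrection]
  push_cast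
  rw [log_add_one_eq hd0, log_add_one_eq (by positivity), log_mul two_ne_zero hd0.ne']
  ring

theorem sqrt_mul_prod_Icc_Uker {d : ℕ} (hd : d ≠ 0) :
    √d * ∏ i ∈ Icc 1 d, Uker (2 * (i : ℝ) + 1) =
      glaisherSeq d ^ 4 * glaisherSeq (d + 1) ^ 4 / glaisherSeq (2 * d + 1) ^ 2 *
        exp (log π - 5 / 6 * log 2 - 3 / 2 + logCorrection d) := by
  have hscalar := log_sqrt_mul_two_pow_div hd
  rw [← sub_eq_iff_eq_add', ← exp_eq_exp, exp_sub, exp_log (by positivity)] at hscalar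
  rw [prod_Icc_Uker, glaisherSeq_eq_mul_exp hd, glaisherSeq_eq_mul_exp (by omega),
    glaisherSeq_eq_mul_exp (by omega), ← hscalar]
  have := factorialProd_pos (2 * d + 1)
  simp only [exp_add, exp_sub, mul_pow, ← exp_nat_mul]
  push_cast
  field_simp

theorem tendsto_sq_mul_log_one_add_inv_sub :
    Tendsto (fun x : ℝ => x ^ 2 * log (1 + 1 / x) - x) atTop (nhds (-(1 / 2))) := by
  have hg : Tendsto (fun x : ℝ => (x - 1)⁻¹) atTop (nhds 0) :=
    (tendsto_atTop_add_const_right _ (-1) tendsto_id).inv_tendsto_atTop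
  rw [tendsto_iff_dist_tendsto_zero]
  refine squeeze_zero' (.of_forall fun _ => dist_nonneg) ?_ hg
  filter_upwards [eventually_ge_atTop 2] with x hx
  have hx0 : 0 < x := by linarith
  have hx1 : 0 < x - 1 := by linarith
  have habs : |-(1 / x)| = 1 / x := by rw [abs_neg, abs_of_pos (by positivity)]
  have htaylor : |log (1 + 1 / x) - 1 / x + 1 / (2 * x ^ 2)| ≤ 1 / (x ^ 2 * (x - 1)) := by
    have h := abs_log_sub_add_sum_range_le (x := -(1 / x))
      (by rw [habs, div_lt_one hx0]; linarith) 2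
    calc _ = |∑ i ∈ range 2, (-(1 / x)) ^ (i + 1) / (i + 1) + log (1 - -(1 / x))| := by
          simp only [sum_range_succ, sum_range_zero, sub_neg_eq_add]
          push_cast
          ring_nf
      _ ≤ _ := h
      _ = _ := by
          rw [habs, div_pow, one_pow]
          field_simp
  calc dist (x ^ 2 * log (1 + 1 / x) - x) (-(1 / 2))
      = x ^ 2 * |log (1 + 1 / x) - 1 / x + 1 / (2 * x ^ 2)| := by
        rw [dist_eq_norm, norm_eq_abs, ← abs_of_pos (by positivity : 0 < x ^ 2), ← abs_mul,
          abs_of_pos (by positivity : 0 < x ^ 2)]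
        congr 1
        field_simp
        ring
    _ ≤ x ^ 2 * (1 / (x ^ 2 * (x - 1))) := by gcongr
    _ = (x - 1)⁻¹ := by field_simp

theorem tendsto_logCorrection : Tendsto logCorrection atTop (nhds (3 / 2)) := by
  have hp := tendsto_sq_mul_log_one_add_inv_sub
  have hq : Tendsto (fun x : ℝ => x * log (1 + 1 / x)) atTop (nhds 1) := by
    simpa using tendsto_mul_log_one_add_div_atTop 1
  have hl : Tendsto (fun x : ℝ => log (1 + 1 / x)) atTop (nhds 0) := by
    have : Tendsto (fun x : ℝ => 1 + 1 / x) atTop (nhds 1) := by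
      simpa using tendsto_const_nhds.add (tendsto_inv_atTop_zero (𝕜 := ℝ))
    simpa [Function.comp_def] using (continuousAt_log one_ne_zero).tendsto.comp this
  have hd : Tendsto (fun d : ℕ => (d : ℝ)) atTop atTop := tendsto_natCast_atTop_atTop
  have h2d : Tendsto (fun d : ℕ => 2 * (d : ℝ)) atTop atTop := hd.const_mul_atTop two_pos
  have := (((((hp.comp hd).const_mul 2).add ((hq.comp hd).const_mul 4)).add
    ((hl.comp hd).const_mul (5 / 3))).sub (hp.comp h2d)).sub
      (((hq.comp h2d).const_mul 2).add ((hl.comp h2d).const_mul (11 / 6)))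
  convert this using 2 with d
  · simp only [logCorrection, Function.comp_apply]
    ring
  · norm_num

theorem tendsto_exp_logCorrection :
    Tendsto (fun d => exp (log π - 5 / 6 * log 2 - 3 / 2 + logCorrection d)) atTop
      (nhds (π * 2 ^ (-(5 / 6) : ℝ))) := by
  rw [show π * 2 ^ (-(5 / 6) : ℝ) = exp (log π - 5 / 6 * log 2 - 3 / 2 + 3 / 2) by
    rw [show log π - 5 / 6 * log 2 - 3 / 2 + 3 / 2 = log π + log 2 * -(5 / 6) by ring,
      exp_add, exp_log pi_pos, ← rpow_def_of_pos two_pos]]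
  exact (continuous_exp.tendsto _).comp (tendsto_const_nhds.add tendsto_logCorrection)

theorem log_factorialProd_succ (m : ℕ) :
    log (factorialProd (m + 1)) = (m + 1) * log m ! - ∑ k ∈ range (m + 1), k * log k := by
  induction m with
  | zero => simp [factorialProd]
  | succ m ih =>
    rw [factorialProd_succ, log_mul (factorialProd_pos _).ne' (by positivity), ih,
      sum_range_succ _ (m + 1), Nat.factorial_succ, Nat.cast_mul,
      log_mul (by positivity) (by positivity)]
    push_cast
    ring

theorem le_mul_log_one_add_inv {x : ℝ} (hx : 0 < x) :
    (2 * x + 1) / 4 - 1 / (x * (x + 1)) ≤ (x * (x + 1) / 2 + 1 / 12) * log (1 + 1 / x) := by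
  set t := 1 / (2 * x + 1) with ht
  -- `log (1 + 1/x) = 2 artanh t`, whose series has nonnegative terms
  have hatanh : t + t ^ 3 / 3 ≤ 1 / 2 * log (1 + 1 / x) := by
    have h := sum_range_le_log_div (x := t) (by positivity)
      (by rw [ht, div_lt_one (by positivity)]; linarith) 2
    rw [show (1 + t) / (1 - t) = 1 + 1 / x by rw [ht]; field_simp; ring] at h
    norm_num [sum_range_succ] at h ⊢
    exact h
  have hcube : 1 / (36 * (2 * x + 1) ^ 3) ≤ 1 / (x * (x + 1)) :=
    one_div_le_one_div_of_le (by positivity) (by nlinarith [pow_pos hx 3])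
  calc (2 * x + 1) / 4 - 1 / (x * (x + 1))
      ≤ (2 * x + 1) / 4 - 1 / (36 * (2 * x + 1) ^ 3) := by linarith
    _ = (x * (x + 1) / 2 + 1 / 12) * (2 * (t + t ^ 3 / 3)) := by
        rw [ht]
        field_simp
        ring
    _ ≤ (x * (x + 1) / 2 + 1 / 12) * log (1 + 1 / x) := by
        gcongr
        linarith

theorem sum_range_mul_log_le {m : ℕ} (hm : 1 ≤ m) :
    ∑ k ∈ range (m + 1), k * log k ≤
      (m * (m + 1) / 2 + 1 / 12) * log m - ((m : ℝ) ^ 2 - 1) / 4 + 1 - 1 / m := by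
  -- the term `- 1/m` absorbs the error `1/(m(m+1))` of `le_mul_log_one_add_inv` at each step
  induction m, hm using Nat.le_induction with
  | base => norm_num [sum_range_succ]
  | succ m hm ih =>
    have hm0 : (0 : ℝ) < m := by exact_mod_cast hm
    have hstep := le_mul_log_one_add_inv hm0
    have hinv : 1 / (m : ℝ) - 1 / (m + 1) = 1 / (m * (m + 1)) := by
      field_simp
      ring
    rw [sum_range_succ]
    push_cast
    rw [log_add_one_eq hm0]
    linarith

theorem exp_neg_three_halves_le_glaisherSeq {n : ℕ} (hn : 2 ≤ n) :
    exp (-(3 / 2)) ≤ glaisherSeq n := by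
  obtain ⟨m, rfl⟩ : ∃ m, n = m + 1 := ⟨n - 1, by omega⟩
  have hm : 1 ≤ m := by omega
  have hm0 : (0 : ℝ) < m := by exact_mod_cast hm
  rw [glaisherSeq_eq_mul_exp (by omega), ← div_le_iff₀ (exp_pos _), ← exp_sub,
    ← le_log_iff_exp_le (factorialProd_pos _), log_factorialProd_succ]
  have hstirling := Stirling.le_log_factorial_stirling (n := m) (by omega)
  have hsum := sum_range_mul_log_le hm
  have hl : ((m + 1 : ℝ) ^ 2 / 2 - 1 / 12) * log (1 + 1 / m) ≤ m / 2 + 1 + 5 / 12 / m := by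
    calc _ ≤ ((m + 1 : ℝ) ^ 2 / 2 - 1 / 12) * (1 / m) := by
          gcongr
          · nlinarith
          · linarith [log_le_sub_one_of_pos (show (0 : ℝ) < 1 + 1 / m by positivity)]
      _ = m / 2 + 1 + 5 / 12 / m := by
          field_simp
          ring
  have h7 : 0 ≤ 7 / 12 / (m : ℝ) := by positivity
  rw [glaisherExponent]
  push_cast
  rw [log_add_one_eq hm0]
  linear_combination mul_le_mul_of_nonneg_left hstirling (by positivity : (0 : ℝ) ≤ m + 1) +
    hsum + hl + h7

end Dimer

open Dimer Filter Finset Real in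
/-- Proposition 7.1, eq. (7.2): `∏_{i=1}^d U(2i+1) ∼ C′/√d` as
`d → ∞`, with `C′ = C/2` and `C = 2^{1/6} e^{1/2} π / A⁶`. -/
theorem statement_15 (A : ℝ) (hA : IsGlaisher A) :
    Filter.Tendsto
      (fun d : ℕ => Real.sqrt d * ∏ i ∈ Finset.Icc 1 d, Uker (2 * (i : ℝ) + 1))
      Filter.atTop
      (nhds ((2 : ℝ) ^ ((1 : ℝ) / 6) * Real.exp (1 / 2) * Real.pi / A ^ 6 / 2)) := by
  rw [isGlaisher_iff] at hA
  set L := exp (1 / 12) / A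
  have hL0 : L ≠ 0 := (lt_of_lt_of_le (exp_pos _) (ge_of_tendsto hA
    (eventually_atTop.2 ⟨2, fun _ => exp_neg_three_halves_le_glaisherSeq⟩))).ne'
  have hA1 := hA.comp (tendsto_add_atTop_nat 1)
  have hA2 := hA.comp (tendsto_atTop_mono (fun d => by omega : ∀ d, d ≤ 2 * d + 1) tendsto_id)
  have hlim := (((hA.pow 4).mul (hA1.pow 4)).div (hA2.pow 2) (pow_ne_zero 2 hL0)).mul
    tendsto_exp_logCorrection
  have hC : (2 : ℝ) ^ ((1 : ℝ) / 6) * exp (1 / 2) * π / A ^ 6 / 2 =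
      L ^ 4 * L ^ 4 / L ^ 2 * (π * 2 ^ (-(5 / 6) : ℝ)) := by
    rw [show (1 : ℝ) / 6 = -(5 / 6) + 1 by norm_num, rpow_add two_pos, rpow_one,
      show exp (1 / 2) = exp (1 / 12) ^ 6 by rw [← exp_nat_mul]; norm_num]
    field_simp
    ring
  rw [hC]
  refine hlim.congr' (eventually_atTop.2 ⟨1, fun d hd => ?_⟩)
  exact (sqrt_mul_prod_Icc_Uker (by omega)).symm
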